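/- Define functions h_d on ℝ∖{0} recursively by h_0(λ) = 2/s(λ) and h_d(λ) = h_{d−1}″(λ) − (2d−1)²·h_{d−1}(λ) for d ≥ 1. Then for every d ≥ 0 and every λ ≠ 0: h_d(λ) = 2^{2d+1}·(2d)!·s(λ)^{−(2d+1)}, and consequently h_d′(λ)/s(λ) = −2^{2d+1}·(2d+1)!·c(λ)·s(λ)^{−(2d+3)}. -/

import Mathlib

open scoped Nat

/-- `sh λ = e^λ - e^{-λ}`. -/
noncomputable def sh (l : ℝ) : ℝ := Real.exp l - Real.exp (-l)

/-- `ch λ = e^λ + e^{-λ}`. -/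
noncomputable def ch (l : ℝ) : ℝ := Real.exp l + Real.exp (-l)

/-!
Write `s = sh`, `c = ch`. Since `s' = c`, `c' = s` and `c² = s² + 4`, for every integer `m`
`(s^m)'' = m² s^m + 4 m (m - 1) s^(m-2)`. For `m = -(2d+1)` the first term is cancelled exactly by
the `(2d+1)² h_d` of the recursion, and the second is `4 (2d+1)(2d+2) s^(-(2d+3))`, which is the
inductive step. Because `h_d` agrees with its closed form on the open set `ℝ ∖ {0}`, derivatives of
`h_d` at `λ ≠ 0` are those of the closed form.
-/

open Filter Topology

lemma sh_eq_two_mul_sinh (l : ℝ) : sh l = 2 * Real.sinh l := by rw [Real.sinh_eq, sh]; ring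

lemma ch_eq_two_mul_cosh (l : ℝ) : ch l = 2 * Real.cosh l := by rw [Real.cosh_eq, ch]; ring

lemma sh_ne_zero {l : ℝ} (hl : l ≠ 0) : sh l ≠ 0 := by
  simpa [sh_eq_two_mul_sinh] using hl

lemma hasDerivAt_sh (l : ℝ) : HasDerivAt sh (ch l) l := by
  simpa only [funext sh_eq_two_mul_sinh, ch_eq_two_mul_cosh] using
    (Real.hasDerivAt_sinh l).const_mul 2

lemma hasDerivAt_ch (l : ℝ) : HasDerivAt ch (sh l) l := by
  simpa only [funext ch_eq_two_mul_cosh, sh_eq_two_mul_sinh] using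
    (Real.hasDerivAt_cosh l).const_mul 2

lemma ch_sq (l : ℝ) : ch l ^ 2 = sh l ^ 2 + 4 := by
  rw [ch_eq_two_mul_cosh, sh_eq_two_mul_sinh, mul_pow, mul_pow, Real.cosh_sq]; ring

lemma hasDerivAt_sh_zpow (m : ℤ) {l : ℝ} (hl : l ≠ 0) :
    HasDerivAt (fun x => sh x ^ m) (m * sh l ^ (m - 1) * ch l) l :=
  (hasDerivAt_zpow m (sh l) (.inl (sh_ne_zero hl))).comp l (hasDerivAt_sh l)

lemma deriv_sh_zpow (m : ℤ) {l : ℝ} (hl : l ≠ 0) :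
    deriv (fun x => sh x ^ m) l = m * sh l ^ (m - 1) * ch l :=
  (hasDerivAt_sh_zpow m hl).deriv

lemma deriv_deriv_sh_zpow (m : ℤ) {l : ℝ} (hl : l ≠ 0) :
    deriv (deriv fun x => sh x ^ m) l = m ^ 2 * sh l ^ m + 4 * m * (m - 1) * sh l ^ (m - 2) := by
  have hderiv : deriv (fun x => sh x ^ m) =ᶠ[𝓝 l] fun x => m * sh x ^ (m - 1) * ch x :=
    (eventually_ne_nhds hl).mono fun x hx => deriv_sh_zpow m hx
  have hs := sh_ne_zero hl
  have hd : HasDerivAt (fun x => m * sh x ^ (m - 1) * ch x)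
      (m * ((m - 1 : ℤ) * sh l ^ (m - 1 - 1) * ch l) * ch l + m * sh l ^ (m - 1) * sh l) l :=
    ((hasDerivAt_sh_zpow (m - 1) hl).const_mul (m : ℝ)).mul (hasDerivAt_ch l)
  rw [hderiv.deriv_eq, hd.deriv]
  have hm1 : sh l ^ (m - 1) = sh l ^ (m - 2) * sh l := by
    rw [← zpow_add_one₀ hs]; ring_nf
  have hm : sh l ^ m = sh l ^ (m - 2) * sh l ^ 2 := by
    rw [← zpow_natCast, ← zpow_add₀ hs]; push_cast; ring_nf
  rw [show m - 1 - 1 = m - 2 by ring, hm1, hm]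
  push_cast
  linear_combination (m * (m - 1) * sh l ^ (m - 2)) * ch_sq l

lemma eventuallyEq_nhds_of_forall_ne {X Y : Type*} [TopologicalSpace X] [T1Space X]
    {f g : X → Y} {a x : X} (hx : x ≠ a) (hfg : ∀ y, y ≠ a → f y = g y) : f =ᶠ[𝓝 x] g :=
  (eventually_ne_nhds hx).mono hfg

theorem stmt11
    (h : ℕ → ℝ → ℝ)
    (h0 : ∀ l : ℝ, h 0 l = 2 / sh l)
    (hrec : ∀ d : ℕ, ∀ l : ℝ,
      h (d + 1) l = deriv (deriv (h d)) l - (2 * ((d : ℝ) + 1) - 1) ^ 2 * h d l) :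
    ∀ d : ℕ, ∀ l : ℝ, l ≠ 0 →
      h d l = 2 ^ (2 * d + 1) * ((2 * d)! : ℝ) * (sh l) ^ (-(2 * (d : ℤ) + 1)) ∧
      deriv (h d) l / sh l =
        -(2 ^ (2 * d + 1) * ((2 * d + 1)! : ℝ)) * ch l * (sh l) ^ (-(2 * (d : ℤ) + 3)) := by
  have closed : ∀ d : ℕ, ∀ l : ℝ, l ≠ 0 →
      h d l = 2 ^ (2 * d + 1) * ((2 * d)! : ℝ) * (sh l) ^ (-(2 * (d : ℤ) + 1)) := by
    intro d
    induction d with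
    | zero => intro l _; simp [h0, div_eq_mul_inv]
    | succ d ih =>
      intro l hl
      rw [hrec, (eventuallyEq_nhds_of_forall_ne hl ih).deriv.deriv_eq]
      simp only [deriv_const_mul_field']
      rw [deriv_deriv_sh_zpow _ hl, ih l hl,
        show 2 * (d + 1) = 2 * d + 1 + 1 by ring, Nat.factorial_succ, Nat.factorial_succ]
      push_cast
      ring_nf
  intro d l hl
  refine ⟨closed d l hl, ?_⟩
  rw [(eventuallyEq_nhds_of_forall_ne hl (closed d)).deriv_eq]
  simp only [deriv_const_mul_field']
  rw [deriv_sh_zpow _ hl, Nat.factorial_succ]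
  have hs := sh_ne_zero hl
  have hpow : sh l ^ (-(2 * (d : ℤ) + 1) - 1) = sh l ^ (-(2 * (d : ℤ) + 3)) * sh l := by
    rw [← zpow_add_one₀ hs]; ring_nf
  rw [div_eq_iff hs, hpow]
  push_cast
  ring
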